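/- For all positive integers m and q, the Ramanujan sum satisfies the Hölder–von Sterneck formula c_m(q) = μ(m/g) · φ(m) / φ(m/g), where g = gcd(m,q). -/

import Mathlib

open ArithmeticFunction

/-- The Ramanujan sum `c_m(q)`, the sum of the `q`-th powers of the primitive
`m`-th roots of unity. -/
noncomputable def ramanujanSum (m q : ℕ) : ℂ :=
  ∑ k ∈ (Finset.Icc 1 m).filter (fun k => Nat.gcd k m = 1),
    Complex.exp (2 * Real.pi * Complex.I * k * q / m)

/-!
Expanding the coprimality condition as `∑_{d ∣ (k, m)} μ(d)` and summing the resulting geometric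
series shows that `m ↦ c_m(q)` is the Dirichlet convolution of `μ` with `d ↦ [d ∣ q] d`, hence
multiplicative. Since `(ab, q) = (a, q)(b, q)` for coprime `a, b`, the Hölder–von Sterneck
expression is multiplicative in `m` too, so it suffices to compare both sides at prime powers,
where `(μ * f)(p^(k+1)) = f(p^(k+1)) - f(p^k)`.
-/

open Finset Complex Real
open scoped ArithmeticFunction.Moebius ArithmeticFunction.zeta

theorem sum_divisors_moebius {R : Type*} [Ring R] (n : ℕ) :
    ∑ d ∈ n.divisors, (μ d : R) = if n = 1 then 1 else 0 := by
  have h := congr($(coe_moebius_mul_coe_zeta (R := R)) n)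
  rwa [coe_mul_zeta_apply, one_apply] at h

theorem sum_Icc_exp_eq_ite (n q : ℕ) :
    ∑ j ∈ Icc 1 n, cexp (2 * π * I * j * q / n) = if n ∣ q then (n : ℂ) else 0 := by
  rcases eq_or_ne n 0 with rfl | hn
  · simp
  have hζ := isPrimitiveRoot_exp n hn
  set y := cexp (2 * π * I / n) ^ q
  have hterm (j : ℕ) : cexp (2 * π * I * j * q / n) = y ^ j := by
    rw [← pow_mul, ← Complex.exp_nat_mul]
    push_cast
    ring_nf
  simp_rw [hterm]
  split_ifs with hdvd
  · simp [y, (hζ.pow_eq_one_iff_dvd q).2 hdvd]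
  · have hy : y ≠ 1 := mt (hζ.pow_eq_one_iff_dvd q).1 hdvd
    have hyn : y ^ n = 1 := by rw [pow_right_comm, hζ.pow_eq_one, one_pow]
    rw [← Finset.Ico_add_one_right_eq_Icc, sum_Ico_eq_sum_range, add_tsub_cancel_right]
    simp_rw [pow_add, pow_one, ← mul_sum, geom_sum_eq hy, hyn, sub_self, zero_div, mul_zero]

theorem filter_dvd_Icc_mul_eq_map {d : ℕ} (hd : d ≠ 0) (n : ℕ) :
    (Icc 1 (d * n)).filter (d ∣ ·) = (Icc 1 n).map ⟨(d * ·), mul_right_injective₀ hd⟩ := by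
  ext k
  simp only [mem_filter, mem_Icc, mem_map, Function.Embedding.coeFn_mk]
  constructor
  · rintro ⟨⟨hk1, hkn⟩, j, rfl⟩
    refine ⟨j, ⟨Nat.one_le_iff_ne_zero.2 ?_, Nat.le_of_mul_le_mul_left hkn (by omega)⟩, rfl⟩
    rintro rfl
    simp at hk1
  · rintro ⟨j, ⟨hj1, hjn⟩, rfl⟩
    exact ⟨⟨Nat.one_le_iff_ne_zero.2 (mul_ne_zero hd (by omega)), Nat.mul_le_mul_left d hjn⟩,
      dvd_mul_right d j⟩

theorem sum_Icc_filter_dvd_exp_eq_ite {d : ℕ} (hd : d ≠ 0) (n q : ℕ) :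
    ∑ k ∈ (Icc 1 (d * n)).filter (d ∣ ·), cexp (2 * π * I * k * q / (d * n : ℕ)) =
      if n ∣ q then (n : ℂ) else 0 := by
  have hd' : (d : ℂ) ≠ 0 := Nat.cast_ne_zero.2 hd
  rw [filter_dvd_Icc_mul_eq_map hd, sum_map, ← sum_Icc_exp_eq_ite]
  refine sum_congr rfl fun j _ => ?_
  rw [Function.Embedding.coeFn_mk, ← mul_div_mul_left (2 * π * I * j * q : ℂ) _ hd']
  push_cast
  ring_nf

noncomputable def idOnDivisors (q : ℕ) : ArithmeticFunction ℂ :=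
  ⟨fun d => if d ∣ q then (d : ℂ) else 0, by simp⟩

theorem idOnDivisors_apply (q d : ℕ) : idOnDivisors q d = if d ∣ q then (d : ℂ) else 0 := rfl

theorem ramanujanSum_eq_coe_moebius_mul_idOnDivisors_apply (m q : ℕ) :
    ramanujanSum m q = ((μ : ArithmeticFunction ℂ) * idOnDivisors q) m := by
  rcases eq_or_ne m 0 with rfl | hm
  · simp [ramanujanSum]
  calc ramanujanSum m q
      = ∑ k ∈ Icc 1 m, ∑ d ∈ (k.gcd m).divisors, (μ d : ℂ) * cexp (2 * π * I * k * q / m) := by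
        rw [ramanujanSum, sum_filter]
        refine sum_congr rfl fun k _ => ?_
        rw [← sum_mul, sum_divisors_moebius, ite_mul, one_mul, zero_mul]
    _ = ∑ d ∈ m.divisors, ∑ k ∈ (Icc 1 m).filter (d ∣ ·),
          (μ d : ℂ) * cexp (2 * π * I * k * q / m) := by
        refine sum_comm' fun k d => ?_
        simp only [Nat.mem_divisors, mem_filter, mem_Icc, Nat.dvd_gcd_iff, ne_eq,
          Nat.gcd_eq_zero_iff]
        tauto
    _ = ∑ d ∈ m.divisors, (μ d : ℂ) * idOnDivisors q (m / d) := by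
        refine sum_congr rfl fun d hd => ?_
        obtain ⟨⟨n, rfl⟩, -⟩ := Nat.mem_divisors.1 hd
        have hd0 : d ≠ 0 := left_ne_zero_of_mul hm
        rw [← mul_sum, Nat.mul_div_cancel_left n (Nat.pos_of_ne_zero hd0), idOnDivisors_apply,
          ← sum_Icc_filter_dvd_exp_eq_ite hd0]
    _ = ((μ : ArithmeticFunction ℂ) * idOnDivisors q) m := by
        rw [mul_apply,
          Nat.sum_divisorsAntidiagonal fun a b => (μ : ArithmeticFunction ℂ) a * idOnDivisors q b]
        rfl

theorem isMultiplicative_idOnDivisors (q : ℕ) : (idOnDivisors q).IsMultiplicative := by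
  refine ⟨by simp [idOnDivisors_apply], fun {a b} hab => ?_⟩
  have hdvd : a * b ∣ q ↔ a ∣ q ∧ b ∣ q :=
    ⟨fun h => ⟨(dvd_mul_right a b).trans h, (dvd_mul_left b a).trans h⟩,
      fun h => hab.mul_dvd_of_dvd_of_dvd h.1 h.2⟩
  simp only [idOnDivisors_apply, hdvd, Nat.cast_mul]
  split_ifs <;> simp_all

theorem coe_moebius_mul_apply_prime_pow_succ {R : Type*} [Ring R] (f : ArithmeticFunction R)
    {p : ℕ} (hp : p.Prime) (k : ℕ) :
    ((μ : ArithmeticFunction R) * f) (p ^ (k + 1)) = f (p ^ (k + 1)) - f (p ^ k) := by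
  have hf : (ζ : ArithmeticFunction R) * ((μ : ArithmeticFunction R) * f) = f := by
    rw [← mul_assoc, coe_zeta_mul_coe_moebius, one_mul]
  conv_rhs => rw [← hf]
  rw [coe_zeta_mul_apply, coe_zeta_mul_apply, Nat.sum_divisors_prime_pow hp,
    Nat.sum_divisors_prime_pow hp, sum_range_succ, add_sub_cancel_left]

noncomputable def holderSterneck (q : ℕ) : ArithmeticFunction ℂ :=
  ⟨fun m => (μ (m / m.gcd q) : ℂ) * m.totient / (m / m.gcd q).totient, by simp⟩

theorem holderSterneck_apply (q m : ℕ) :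
    holderSterneck q m = (μ (m / m.gcd q) : ℂ) * m.totient / (m / m.gcd q).totient := rfl

theorem isMultiplicative_holderSterneck (q : ℕ) : (holderSterneck q).IsMultiplicative := by
  refine ⟨by simp [holderSterneck_apply], fun {a b} hab => ?_⟩
  have hga := Nat.gcd_dvd_left a q
  have hgb := Nat.gcd_dvd_left b q
  have hcop : (a / a.gcd q).Coprime (b / b.gcd q) :=
    (hab.coprime_div_left hga).coprime_div_right hgb
  have hgcd : (a * b).gcd q = a.gcd q * b.gcd q := by
    rw [Nat.gcd_comm, hab.gcd_mul, Nat.gcd_comm, Nat.gcd_comm q]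
  simp only [holderSterneck_apply, hgcd, ← Nat.div_mul_div_comm hga hgb,
    isMultiplicative_moebius.map_mul_of_coprime hcop, Nat.totient_mul hab, Nat.totient_mul hcop]
  push_cast
  ring

theorem holderSterneck_apply_prime_pow_succ (q : ℕ) {p : ℕ} (hp : p.Prime) (k : ℕ) :
    holderSterneck q (p ^ (k + 1)) = idOnDivisors q (p ^ (k + 1)) - idOnDivisors q (p ^ k) := by
  obtain ⟨j, hj, hgcd⟩ := (Nat.dvd_prime_pow hp).1 (Nat.gcd_dvd_left (p ^ (k + 1)) q)
  have hdvd {i : ℕ} (hi : i ≤ k + 1) : p ^ i ∣ q ↔ i ≤ j := by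
    rw [← Nat.pow_dvd_pow_iff_le_right hp.one_lt, ← hgcd, Nat.dvd_gcd_iff,
      and_iff_right (pow_dvd_pow p hi)]
  simp only [holderSterneck_apply, idOnDivisors_apply, hgcd, Nat.pow_div hj hp.pos,
    hdvd le_rfl, hdvd k.le_succ]
  obtain rfl | rfl | hjk : j = k + 1 ∨ j = k ∨ j < k := by omega
  · rw [Nat.sub_self, pow_zero, Nat.totient_prime_pow_succ hp]
    simp [Nat.cast_sub hp.one_le, pow_succ]
    ring
  · have hp1 : (p : ℂ) - 1 ≠ 0 := sub_ne_zero.2 (by exact_mod_cast hp.ne_one)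
    simp [Nat.totient_prime_pow_succ hp, Nat.totient_prime hp, moebius_apply_prime hp,
      Nat.cast_sub hp.one_le]
    field_simp
  · rw [moebius_apply_prime_pow hp (by omega), if_neg (by omega)]
    simp [show ¬ k + 1 ≤ j by omega, show ¬ k ≤ j by omega]

theorem coe_moebius_mul_idOnDivisors (q : ℕ) :
    (μ : ArithmeticFunction ℂ) * idOnDivisors q = holderSterneck q := by
  have hmul := isMultiplicative_moebius.intCast.mul (isMultiplicative_idOnDivisors q)
  have hhs := isMultiplicative_holderSterneck q
  refine (IsMultiplicative.eq_iff_eq_on_prime_powers _ hmul _ hhs).2 fun p k hp => ?_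
  cases k with
  | zero => rw [pow_zero, hmul.map_one, hhs.map_one]
  | succ k =>
    rw [coe_moebius_mul_apply_prime_pow_succ _ hp, holderSterneck_apply_prime_pow_succ q hp]

theorem ramanujanSum_eq_moebius_mul_totient_div_general (m q : ℕ) :
    ramanujanSum m q =
      (moebius (m / Nat.gcd m q) : ℂ) * (Nat.totient m : ℂ) /
        (Nat.totient (m / Nat.gcd m q) : ℂ) := by
  rw [ramanujanSum_eq_coe_moebius_mul_idOnDivisors_apply, coe_moebius_mul_idOnDivisors,
    holderSterneck_apply]

/-- The Hölder–von Sterneck formula for the Ramanujan sums. -/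
theorem ramanujanSum_eq_moebius_mul_totient_div (m q : ℕ) (hm : 0 < m) (hq : 0 < q) :
    ramanujanSum m q =
      (moebius (m / Nat.gcd m q) : ℂ) * (Nat.totient m : ℂ) /
        (Nat.totient (m / Nat.gcd m q) : ℂ) :=
  ramanujanSum_eq_moebius_mul_totient_div_general m q
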